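/- arXiv:2304.05310 — 6 statements merged into one kernel-verified Lean document; each statement's English description precedes it below -/
import Mathlib

section
/- Let F : ℝⁿ → ℝⁿ be continuous and T > 0. Define G(x) = (1/T)·(F(x) − x). Consider the delay differential equation h'(t) = G(h(t−τ)) for t ≥ 0 with constant initial function h(t) = x for t ≤ 0, and delay τ = T. Then for every x, the solution satisfies h(T) = F(x); i.e., the NDDE flow at time T exactly represents the map F. -/
open Set

theorem eq_add_smul_of_hasDerivWithinAt_const {E : Type*} [NormedAddCommGroup E]
    [NormedSpace ℝ E] {f : ℝ → E} {c : E} {a b : ℝ} (hab : a ≤ b)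
    (hf : ∀ t ∈ Icc a b, HasDerivWithinAt f c (Ici a) t) : f b = f a + (b - a) • c := by
  have hline : ∀ t, HasDerivWithinAt (fun s : ℝ => f a + (s - a) • c) c (Ici t) t := fun t => by
    simpa using (((hasDerivAt_id t).sub_const a).smul_const c).const_add (f a) |>.hasDerivWithinAt
  have hcont : ContinuousOn f (Icc a b) := fun t ht =>
    (hf t ht).continuousWithinAt.mono Icc_subset_Ici_self
  refine eq_of_has_deriv_right_eq (f' := fun _ => c)
    (fun t ht => (hf t (Ico_subset_Icc_self ht)).mono (Ici_subset_Ici.2 ht.1))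
    (fun t _ => hline t) hcont (by fun_prop) (by simp) b ⟨hab, le_rfl⟩

/-- Method of steps: during the first delay interval the delayed state is the constant history. -/
theorem eq_add_smul_of_hasDerivWithinAt_delayed {E : Type*} [NormedAddCommGroup E]
    [NormedSpace ℝ E] {G : E → E} {h : ℝ → E} {τ : ℝ} (hτ : 0 ≤ τ) {x : E}
    (hist : ∀ t ≤ (0 : ℝ), h t = x)
    (hdde : ∀ t ∈ Ici (0 : ℝ), HasDerivWithinAt h (G (h (t - τ))) (Ici 0) t) :
    h τ = x + τ • G x := by
  have hderiv : ∀ t ∈ Icc 0 τ, HasDerivWithinAt h (G x) (Ici 0) t := fun t ht => by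
    simpa only [hist (t - τ) (by linarith [ht.2])] using hdde t ht.1
  simpa only [hist 0 le_rfl, sub_zero] using eq_add_smul_of_hasDerivWithinAt_const hτ hderiv

theorem ndde_represents_F_general {n : ℕ}
    (F : EuclideanSpace ℝ (Fin n) → EuclideanSpace ℝ (Fin n))
    (T : ℝ) (hT : 0 < T)
    (G : EuclideanSpace ℝ (Fin n) → EuclideanSpace ℝ (Fin n))
    (hG : ∀ x, G x = (1 / T) • (F x - x))
    (h : EuclideanSpace ℝ (Fin n) → ℝ → EuclideanSpace ℝ (Fin n))
    (hist : ∀ x, ∀ t ≤ (0 : ℝ), h x t = x)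
    (hdde : ∀ x, ∀ t ∈ Set.Ici (0 : ℝ),
      HasDerivWithinAt (h x) (G (h x (t - T))) (Set.Ici 0) t) :
    ∀ x, h x T = F x := by
  intro x
  rw [eq_add_smul_of_hasDerivWithinAt_delayed hT.le (hist x) (hdde x), hG, smul_smul,
    mul_one_div_cancel hT.ne', one_smul, add_sub_cancel]

/-- With delay τ = T and constant initial function `x`, the NDDE
`h'(t) = G(h(t−T))`, `G(x) = (1/T)•(F(x) − x)`, satisfies `h(T) = F(x)`. -/
theorem ndde_represents_F {n : ℕ}
    (F : EuclideanSpace ℝ (Fin n) → EuclideanSpace ℝ (Fin n)) (hF : Continuous F)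
    (T : ℝ) (hT : 0 < T)
    (G : EuclideanSpace ℝ (Fin n) → EuclideanSpace ℝ (Fin n))
    (hG : ∀ x, G x = (1 / T) • (F x - x))
    (h : EuclideanSpace ℝ (Fin n) → ℝ → EuclideanSpace ℝ (Fin n))
    (hist : ∀ x, ∀ t ≤ (0 : ℝ), h x t = x)
    (hdde : ∀ x, ∀ t ∈ Set.Ici (0 : ℝ),
      HasDerivWithinAt (h x) (G (h x (t - T))) (Set.Ici 0) t) :
    ∀ x, h x T = F x :=
  ndde_represents_F_general F T hT G hG h hist hdde
end

section
/- Fix 0 < r₁ < r₂ < r₃ and set r = (r₁ + r₂)/2. Consider the DDE in ℝᵈ (d ≥ 1): h₁'(t) = ‖h(t−τ)‖ − r, hᵢ'(t) = 0 for i ≥ 2, t ≥ 0, with constant initial function h(t) = x for t ≤ 0, and terminal time T = τ. Then h₁(T) = x₁ + T·(‖x‖ − r). Consequently, for T sufficiently large, the map x ↦ h(T) sends the set {‖x‖ ≤ r₁} and the set {r₂ ≤ ‖x‖ ≤ r₃} to two sets that are separated by the hyperplane {y : y₁ = c} for some constant c; specifically for T > (r₃ + r₁)/ (r − r₁) ·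 1 one can take any c with sup over the inner ball of h₁(T) < c < inf over the annulus of h₁(T). -/
/-!
On `[0, τ]` the delayed argument `t - τ` lies in `[-τ, 0]`, where the history is the constant `x`,
so the right-hand side of the delay equation is the constant `F x` and the solution moves on the
line `x + t • F x`. With `F` as in the theorem, the first coordinate at time `T = τ` is
`x₁ + T (‖x‖ - r)`. Since `|x₁| ≤ ‖x‖`, it is at most `r₁ - T (r - r₁)` on the ball of radius `r₁`
and at least `-r₃ + T (r - r₁)` on the annulus `r₂ ≤ ‖x‖ ≤ r₃` (using `r₂ - r = r - r₁`), and the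
bound `T (r - r₁) > max 0 (r₁ + r₃)` puts the midpoint `(r₁ - r₃) / 2` of these two bounds strictly
between them.
-/

open Set

section

variable {E : Type*} [NormedAddCommGroup E] [NormedSpace ℝ E]

theorem eq_add_sub_smul_of_forall_hasDerivWithinAt {f : ℝ → E} {v : E} {a b : ℝ} (hab : a ≤ b)
    (hf : ∀ t ∈ Icc a b, HasDerivWithinAt f v (Icc a b) t) : f b = f a + (b - a) • v := by
  have hg : ∀ t ∈ Icc a b, HasDerivWithinAt (fun t => f t - (t - a) • v) 0 (Icc a b) t :=
    fun t ht => ((hf t ht).sub (((hasDerivAt_id' t).sub_const a).smul_const v).hasDerivWithinAt)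
      |>.congr_deriv (by rw [one_smul, sub_self])
  have := norm_image_sub_le_of_norm_deriv_le_segment' hg (fun _ _ => norm_zero.le) b
    (right_mem_Icc.2 hab)
  rw [zero_mul, norm_le_zero_iff, sub_self, zero_smul, sub_zero, sub_sub, sub_eq_zero] at this
  rw [this, add_comm]

theorem eq_add_smul_of_hasDerivWithinAt_delay {F : E → E} {f : ℝ → E} {x : E} {τ : ℝ}
    (hτ : 0 ≤ τ) (hist : ∀ t ∈ Icc (-τ) 0, f t = x)
    (hf : ∀ t ∈ Icc 0 τ, HasDerivWithinAt f (F (f (t - τ))) (Icc 0 τ) t) :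
    f τ = x + τ • F x := by
  have hconst : ∀ t ∈ Icc 0 τ, HasDerivWithinAt f (F x) (Icc 0 τ) t := fun t ht => by
    simpa [hist (t - τ) ⟨by linarith [ht.1], by linarith [ht.2]⟩] using hf t ht
  simpa [hist 0 ⟨neg_nonpos.2 hτ, le_rfl⟩] using
    eq_add_sub_smul_of_forall_hasDerivWithinAt hτ hconst

end

theorem ndde_separates_ball_and_annulus_general {d : ℕ} (hd : 0 < d)
    (r₁ r₂ r₃ r τ T : ℝ)
    (h12 : r₁ < r₂)
    (hr : r = (r₁ + r₂) / 2) (hτT : τ = T) (hT : 0 < T)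
    (h : EuclideanSpace ℝ (Fin d) → ℝ → EuclideanSpace ℝ (Fin d))
    (hist : ∀ x, ∀ t ≤ (0 : ℝ), h x t = x)
    (hdde : ∀ x, ∀ t ∈ Set.Ici (0 : ℝ),
      HasDerivWithinAt (h x)
        ((WithLp.toLp 2 (fun i => if i = (⟨0, hd⟩ : Fin d) then ‖h x (t - τ)‖ - r else 0) :
          EuclideanSpace ℝ (Fin d)))
        (Set.Ici 0) t) :
    (∀ x, h x T ⟨0, hd⟩ = x ⟨0, hd⟩ + T * (‖x‖ - r)) ∧
    (T > (r₃ + r₁) / (r - r₁) →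
      ∃ c : ℝ,
        (∀ x : EuclideanSpace ℝ (Fin d), ‖x‖ ≤ r₁ → h x T ⟨0, hd⟩ < c) ∧
        (∀ x : EuclideanSpace ℝ (Fin d), r₂ ≤ ‖x‖ → ‖x‖ ≤ r₃ → c < h x T ⟨0, hd⟩)) := by
  subst hτT
  set i₀ : Fin d := ⟨0, hd⟩
  have hsol : ∀ x, h x τ i₀ = x i₀ + τ * (‖x‖ - r) := fun x => by
    have := eq_add_smul_of_hasDerivWithinAt_delay
      (F := fun y => WithLp.toLp 2 fun i => if i = i₀ then ‖y‖ - r else 0)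
      hT.le (fun t ht => hist x t ht.2)
      (fun t ht => (hdde x t ht.1).mono Icc_subset_Ici_self)
    simp [this, i₀]
  have hcoord : ∀ x : EuclideanSpace ℝ (Fin d), |x i₀| ≤ ‖x‖ := fun x => PiLp.norm_apply_le x i₀
  refine ⟨hsol, fun hτbig => ?_⟩
  have hgap : r₁ + r₃ < τ * (r - r₁) := by
    rwa [gt_iff_lt, div_lt_iff₀ (by linarith), add_comm] at hτbig
  have hpos : 0 < τ * (r - r₁) := mul_pos hT (by linarith)
  refine ⟨(r₁ - r₃) / 2, fun x hx => ?_, fun x hx₂ hx₃ => ?_⟩ <;>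
    rw [hsol] <;> nlinarith [abs_le.1 (hcoord x)]

/-- For the DDE `h₁' = ‖h(t−τ)‖ − r`, `hᵢ' = 0 (i ≥ 2)` with constant
history `x` and `τ = T`, one has `h₁(T) = x₁ + T(‖x‖ − r)`; and for
`T > (r₃+r₁)/(r−r₁)` the images of the inner ball and the annulus are separated by
a hyperplane `{y : y₁ = c}`. -/
theorem ndde_separates_ball_and_annulus {d : ℕ} (hd : 0 < d)
    (r₁ r₂ r₃ r τ T : ℝ)
    (h01 : 0 < r₁) (h12 : r₁ < r₂) (h23 : r₂ < r₃)
    (hr : r = (r₁ + r₂) / 2) (hτT : τ = T) (hT : 0 < T)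
    (h : EuclideanSpace ℝ (Fin d) → ℝ → EuclideanSpace ℝ (Fin d))
    (hist : ∀ x, ∀ t ≤ (0 : ℝ), h x t = x)
    (hdde : ∀ x, ∀ t ∈ Set.Ici (0 : ℝ),
      HasDerivWithinAt (h x)
        ((WithLp.toLp 2 (fun i => if i = (⟨0, hd⟩ : Fin d) then ‖h x (t - τ)‖ - r else 0) :
          EuclideanSpace ℝ (Fin d)))
        (Set.Ici 0) t) :
    (∀ x, h x T ⟨0, hd⟩ = x ⟨0, hd⟩ + T * (‖x‖ - r)) ∧
    (T > (r₃ + r₁) / (r - r₁) →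
      ∃ c : ℝ,
        (∀ x : EuclideanSpace ℝ (Fin d), ‖x‖ ≤ r₁ → h x T ⟨0, hd⟩ < c) ∧
        (∀ x : EuclideanSpace ℝ (Fin d), r₂ ≤ ‖x‖ → ‖x‖ ≤ r₃ → c < h x T ⟨0, hd⟩)) :=
  ndde_separates_ball_and_annulus_general hd r₁ r₂ r₃ r τ T h12 hr hτT hT h hist hdde
end

section
/- Let 0 < r₁ < r₂ < r₃ and g : ℝᵈ → ℝ with g(x) = 1 for ‖x‖ ≤ r₁ and g(x) = −1 for r₂ ≤ ‖x‖ ≤ r₃. There is no Lipschitz vector field f : ℝᵈ × ℝ → ℝᵈ, time T > 0, and continuous linear functional ℓ : ℝᵈ → ℝ plus constant b, such that ℓ(Φ_T(x)) + b has the same sign as g(x) on the domain of g, when d = 1. -/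
/-!
Solutions of a scalar ODE with Lipschitz right-hand side cannot cross: if two of them met at
some time, backward uniqueness would force their initial values to agree, so by the intermediate
value theorem the time-`T` flow is strictly increasing. Composed with an affine readout it is
monotone, hence cannot be positive at `0` while negative at both `-r₂` and `r₂`.
-/

open Set

theorem ODE_solution_unique_of_hasDerivWithinAt_Icc_left {E : Type*} [NormedAddCommGroup E]
    [NormedSpace ℝ E] {v : ℝ → E → E} {K : NNReal} (hv : ∀ t, LipschitzWith K (v t))
    {γ δ : ℝ → E} {a b t₀ : ℝ} (ht₀ : t₀ ∈ Icc a b)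
    (hγ : ∀ t ∈ Icc a b, HasDerivWithinAt γ (v t (γ t)) (Icc a b) t)
    (hδ : ∀ t ∈ Icc a b, HasDerivWithinAt δ (v t (δ t)) (Icc a b) t)
    (heq : γ t₀ = δ t₀) :
    EqOn γ δ (Icc a t₀) := by
  have hsub : Icc a t₀ ⊆ Icc a b := Icc_subset_Icc_right ht₀.2
  have hcont : ∀ ε : ℝ → E, (∀ t ∈ Icc a b, HasDerivWithinAt ε (v t (ε t)) (Icc a b) t) →
      ContinuousOn ε (Icc a t₀) :=
    fun ε hε t ht => (hε t (hsub ht)).continuousWithinAt.mono hsub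
  have hleft : ∀ ε : ℝ → E, (∀ t ∈ Icc a b, HasDerivWithinAt ε (v t (ε t)) (Icc a b) t) →
      ∀ t ∈ Ioc a t₀, HasDerivWithinAt ε (v t (ε t)) (Iic t) t :=
    fun ε hε t ht => (hε t (hsub (Ioc_subset_Icc_self ht))).mono_of_mem_nhdsWithin
      (Icc_mem_nhdsLE_of_mem ⟨ht.1, ht.2.trans ht₀.2⟩)
  exact ODE_solution_unique_of_mem_Icc_left (s := fun _ => univ)
    (fun t _ => (hv t).lipschitzOnWith) (hcont γ hγ) (hleft γ hγ) (fun _ _ => mem_univ _)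
    (hcont δ hδ) (hleft δ hδ) (fun _ _ => mem_univ _) heq

theorem strictMono_flow {v : ℝ → ℝ → ℝ} {K : NNReal} (hv : ∀ t, LipschitzWith K (v t))
    {T : ℝ} (hT : 0 ≤ T) {sol : ℝ → ℝ → ℝ} (hinit : ∀ x, sol x 0 = x)
    (hsol : ∀ x, ∀ t ∈ Icc 0 T, HasDerivWithinAt (sol x) (v t (sol x t)) (Icc 0 T) t) :
    StrictMono fun x => sol x T := by
  intro x y hxy
  by_contra! hle
  have hgap : ContinuousOn (fun t => sol y t - sol x t) (Icc 0 T) :=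
    fun t ht => (hsol y t ht).continuousWithinAt.sub (hsol x t ht).continuousWithinAt
  obtain ⟨t₀, ht₀, hmeet⟩ := intermediate_value_Icc' hT hgap
    ⟨sub_nonpos.2 hle, by simpa [hinit] using hxy.le⟩
  have hinitial := ODE_solution_unique_of_hasDerivWithinAt_Icc_left hv ht₀ (hsol x) (hsol y)
    (sub_eq_zero.1 hmeet).symm (left_mem_Icc.2 ht₀.1)
  rw [hinit, hinit] at hinitial
  exact hxy.ne hinitial

theorem affine_le_max_of_mem_Icc (a b : ℝ) {u v w : ℝ} (hv : v ∈ Icc u w) :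
    a * v + b ≤ max (a * u + b) (a * w + b) := by
  rcases le_total 0 a with ha | ha
  · exact le_max_of_le_right (by nlinarith [hv.2])
  · exact le_max_of_le_left (by nlinarith [hv.1])

theorem no_ode_affine_readout_represents_g_general
    (r₁ r₂ r₃ : ℝ) (h01 : 0 < r₁) (h12 : r₁ < r₂) (h23 : r₂ < r₃)
    (f : ℝ → ℝ → ℝ) (K : NNReal) (hLip : ∀ t, LipschitzWith K fun x => f x t)
    (T : ℝ) (hT : 0 < T)
    (sol : ℝ → ℝ → ℝ) (hinit : ∀ x₀, sol x₀ 0 = x₀)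
    (hsol : ∀ x₀, ∀ t ∈ Set.Icc 0 T,
      HasDerivWithinAt (sol x₀) (f (sol x₀ t) t) (Set.Icc 0 T) t)
    (a b : ℝ)
    (hsep : ∀ x : ℝ, (|x| ≤ r₁ → 0 < a * sol x T + b) ∧
      (r₂ ≤ |x| → |x| ≤ r₃ → a * sol x T + b < 0)) :
    False := by
  have hflow := strictMono_flow (v := fun t x => f x t) hLip hT.le hinit hsol
  have hr₂ : 0 < r₂ := h01.trans h12
  have hcentre : 0 < a * sol 0 T + b := (hsep 0).1 (by simpa using h01.le)
  have hsphere : ∀ x, |x| = r₂ → a * sol x T + b < 0 :=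
    fun x hx => (hsep x).2 hx.ge (hx.trans_le h23.le)
  have hbetween := affine_le_max_of_mem_Icc a b
    ⟨(hflow (neg_lt_zero.2 hr₂)).le, (hflow hr₂).le⟩
  have hmax := max_lt (hsphere (-r₂) (by simp [hr₂.le])) (hsphere r₂ (abs_of_pos hr₂))
  linarith

/-- d = 1: No Lipschitz vector field `f`, time `T > 0`, and affine
readout `x ↦ a·x + b` can make `a·Φ_T(x) + b` have the same sign as the function
`g` which is `+1` on `|x| ≤ r₁` and `−1` on `r₂ ≤ |x| ≤ r₃`. -/
theorem no_ode_affine_readout_represents_g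
    (r₁ r₂ r₃ : ℝ) (h01 : 0 < r₁) (h12 : r₁ < r₂) (h23 : r₂ < r₃)
    (f : ℝ → ℝ → ℝ) (K : NNReal) (hLip : ∀ t, LipschitzWith K fun x => f x t)
    (hcont : ∀ x, Continuous (f x))
    (T : ℝ) (hT : 0 < T)
    (sol : ℝ → ℝ → ℝ) (hinit : ∀ x₀, sol x₀ 0 = x₀)
    (hsol : ∀ x₀, ∀ t ∈ Set.Icc 0 T,
      HasDerivWithinAt (sol x₀) (f (sol x₀ t) t) (Set.Icc 0 T) t)
    (a b : ℝ)
    (hsep : ∀ x : ℝ, (|x| ≤ r₁ → 0 < a * sol x T + b) ∧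
      (r₂ ≤ |x| → |x| ≤ r₃ → a * sol x T + b < 0)) :
    False :=
  no_ode_affine_readout_represents_g_general r₁ r₂ r₃ h01 h12 h23 f K hLip T hT sol hinit hsol a b
    hsep
end

section
/- Let f : ℝⁿ × ℝⁿ → ℝⁿ be bounded and Lipschitz in both arguments, τ > 0, and φ : [−τ, 0] → ℝⁿ continuous. Then the DDE h'(t) = f(h(t), h(t−τ)) with initial function h = φ on [−τ, 0] has a unique solution on [0, ∞), constructed by the method of steps: on each interval [kτ, (k+1)τ] the equation reduces to an ODE with known continuous forcing h(t−τ). -/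
/-!
On each interval `[a, a + τ]` with `a ≥ 0` the delayed term `h (t - τ)` is already known and
continuous, so the delay equation is an ODE `y' = f y (g t)` with continuous forcing `g`, solved by
Picard–Lindelöf; iterating gives solutions on `[-τ, k τ]` for every `k`. Uniqueness follows the
same steps with the Grönwall-type uniqueness theorem for ODEs, and it is also what makes the
solutions on the various `[-τ, b]` fit together into one solution on `[-τ, ∞)`.
-/

open Set Filter Topology

section

variable {E : Type*} [NormedAddCommGroup E] [NormedSpace ℝ E]

theorem hasDerivWithinAt_union_of_isClosed {g : ℝ → E} {g' : E} {s t : Set ℝ} {x : ℝ}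
    (hs : IsClosed s) (ht : IsClosed t) (hgs : x ∈ s → HasDerivWithinAt g g' s x)
    (hgt : x ∈ t → HasDerivWithinAt g g' t x) : HasDerivWithinAt g g' (s ∪ t) x := by
  classical
  refine .union ?_ ?_
  · exact if hx : x ∈ s then hgs hx
      else HasFDerivWithinAt.of_notMem_closure (by rwa [hs.closure_eq])
  · exact if hx : x ∈ t then hgt hx
      else HasFDerivWithinAt.of_notMem_closure (by rwa [ht.closure_eq])

theorem exists_hasDerivWithinAt_of_continuousOn_forcing [CompleteSpace E]
    {F : Type*} [TopologicalSpace F] {f : E → F → E} {K : NNReal} {C : ℝ}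
    (hf : ∀ c, LipschitzWith K (f · c)) (hfc : ∀ x, Continuous (f x)) (hbdd : ∀ u v, ‖f u v‖ ≤ C)
    {g : ℝ → F} {a b : ℝ} (hab : a ≤ b) (hg : ContinuousOn g (Icc a b)) (x₀ : E) :
    ∃ α : ℝ → E, α a = x₀ ∧ ∀ t ∈ Icc a b, HasDerivWithinAt α (f (α t) (g t)) (Icc a b) t := by
  have hC : 0 ≤ C := (norm_nonneg _).trans (hbdd 0 (g a))
  have hpl : IsPicardLindelof (fun t y => f y (g t)) (⟨a, left_mem_Icc.2 hab⟩ : Icc a b) x₀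
      (C * (b - a)).toNNReal 0 C.toNNReal K :=
    { lipschitzOnWith := fun _ _ => (hf _).lipschitzOnWith
      continuousOn := fun x _ => (hfc x).comp_continuousOn hg
      norm_le := fun _ _ _ _ => (hbdd _ _).trans (Real.le_coe_toNNReal C)
      mul_max_le := by
        simp [Real.coe_toNNReal _ hC, Real.coe_toNNReal _ (mul_nonneg hC (sub_nonneg.2 hab)),
          max_eq_left (sub_nonneg.2 hab)] }
  exact hpl.exists_eq_forall_mem_Icc_hasDerivWithinAt₀

def IsDDESolutionOn (f : E → E → E) (τ : ℝ) (φ : ℝ → E) (b : ℝ) (H : ℝ → E) : Prop :=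
  (∀ t ∈ Icc (-τ) 0, H t = φ t) ∧ ContinuousOn H (Icc (-τ) b) ∧
    ∀ t ∈ Icc 0 b, HasDerivWithinAt H (f (H t) (H (t - τ))) (Icc 0 b) t

def IsDDESolution (f : E → E → E) (τ : ℝ) (φ : ℝ → E) (h : ℝ → E) : Prop :=
  (∀ t ∈ Icc (-τ) 0, h t = φ t) ∧ ContinuousOn h (Ici (-τ)) ∧
    ∀ t ∈ Ici (0 : ℝ), HasDerivWithinAt h (f (h t) (h (t - τ))) (Ici 0) t

variable {f : E → E → E} {K : NNReal} {τ : ℝ} {φ : ℝ → E} {a b : ℝ} {G H : ℝ → E}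

theorem isDDESolutionOn_zero (hφ : ContinuousOn φ (Icc (-τ) 0)) : IsDDESolutionOn f τ φ 0 φ :=
  ⟨fun _ _ => rfl, hφ, fun _ _ => HasFDerivWithinAt.of_subsingleton (subsingleton_Icc_of_ge le_rfl)⟩

namespace IsDDESolutionOn

theorem mono (hH : IsDDESolutionOn f τ φ b H) (hab : a ≤ b) : IsDDESolutionOn f τ φ a H :=
  ⟨hH.1, hH.2.1.mono (Icc_subset_Icc_right hab), fun t ht =>
    (hH.2.2 t ⟨ht.1, ht.2.trans hab⟩).mono (Icc_subset_Icc_right hab)⟩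

theorem congr (hH : IsDDESolutionOn f τ φ b H) (hτ : 0 ≤ τ) (hb : 0 ≤ b)
    (hGH : EqOn G H (Icc (-τ) b)) : IsDDESolutionOn f τ φ b G := by
  refine ⟨fun t ht => (hGH ⟨ht.1, ht.2.trans hb⟩).trans (hH.1 t ht), hH.2.1.congr hGH,
    fun t ht => ?_⟩
  have hsub : Icc 0 b ⊆ Icc (-τ) b := Icc_subset_Icc_left (by linarith)
  rw [hGH (hsub ht), hGH ⟨by linarith [ht.1], by linarith [ht.2]⟩]
  exact (hH.2.2 t ht).congr (fun s hs => hGH (hsub hs)) (hGH (hsub ht))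

theorem hasDerivWithinAt_Ici (hH : IsDDESolutionOn f τ φ b H) {t : ℝ} (ht : t ∈ Ico 0 b) :
    HasDerivWithinAt H (f (H t) (H (t - τ))) (Ici t) t :=
  (hH.2.2 t (Ico_subset_Icc_self ht)).mono_of_mem_nhdsWithin <|
    mem_of_superset (Icc_mem_nhdsGE ht.2) (Icc_subset_Icc_left ht.1)

theorem eqOn_of_eqOn_Icc (hf : ∀ c, LipschitzWith K (f · c)) (hG : IsDDESolutionOn f τ φ b G)
    (hH : IsDDESolutionOn f τ φ b H) (ha : 0 ≤ a) (hab : a ≤ b) (hba : b ≤ a + τ)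
    (hGH : EqOn G H (Icc (-τ) a)) : EqOn G H (Icc (-τ) b) := by
  have hdelay : ∀ t ∈ Ico a b, t - τ ∈ Icc (-τ) a := fun t ht =>
    ⟨by linarith [ht.1], by linarith [ht.2]⟩
  have hsub : Icc a b ⊆ Icc (-τ) b := Icc_subset_Icc_left (by linarith)
  have hIco : ∀ t ∈ Ico a b, t ∈ Ico 0 b := fun t ht => ⟨ha.trans ht.1, ht.2⟩
  -- Once `G = H` up to time `a`, both solve the same ODE with forcing `H (t - τ)` on `[a, b]`.
  have hstep : EqOn G H (Icc a b) :=
    ODE_solution_unique_of_mem_Icc_right (v := fun t y => f y (H (t - τ)))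
      (s := fun _ => univ) (fun _ _ => (hf _).lipschitzOnWith) (hG.2.1.mono hsub)
      (fun t ht => hGH (hdelay t ht) ▸ hG.hasDerivWithinAt_Ici (hIco t ht)) (fun _ _ => trivial)
      (hH.2.1.mono hsub) (fun t ht => hH.hasDerivWithinAt_Ici (hIco t ht)) (fun _ _ => trivial)
      (hGH ⟨by linarith, le_rfl⟩)
  rw [← Icc_union_Icc_eq_Icc (by linarith : -τ ≤ a) hab]
  exact hGH.union hstep

theorem eqOn (hf : ∀ c, LipschitzWith K (f · c)) (hτ : 0 < τ) (hG : IsDDESolutionOn f τ φ b G)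
    (hH : IsDDESolutionOn f τ φ b H) : EqOn G H (Icc (-τ) b) := by
  obtain ⟨k, hk⟩ := exists_nat_ge (b / τ)
  replace hk : b ≤ k * τ := (div_le_iff₀ hτ).1 hk
  induction k generalizing b with
  | zero =>
    intro t ht
    have ht0 : t ∈ Icc (-τ) 0 := ⟨ht.1, by simpa using ht.2.trans hk⟩
    rw [hG.1 t ht0, hH.1 t ht0]
  | succ k ih =>
    by_cases hb : b ≤ k * τ
    · exact ih hG hH hb
    · push_cast at hk
      exact eqOn_of_eqOn_Icc hf hG hH (by positivity) (not_le.1 hb).le (by linarith)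
        (ih (hG.mono (not_le.1 hb).le) (hH.mono (not_le.1 hb).le) le_rfl)

theorem exists_extend [CompleteSpace E] {C : ℝ} (hf : ∀ c, LipschitzWith K (f · c))
    (hfc : ∀ x, Continuous (f x)) (hbdd : ∀ u v, ‖f u v‖ ≤ C) (hτ : 0 ≤ τ) (ha : 0 ≤ a)
    (hH : IsDDESolutionOn f τ φ a H) : ∃ H', IsDDESolutionOn f τ φ (a + τ) H' := by
  have hdelay : MapsTo (· - τ) (Icc a (a + τ)) (Icc (-τ) a) := fun t ht =>
    ⟨by linarith [ht.1], by linarith [ht.2]⟩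
  obtain ⟨α, hαa, hα⟩ := exists_hasDerivWithinAt_of_continuousOn_forcing hf hfc hbdd
    (by linarith : a ≤ a + τ) (hH.2.1.comp (continuous_sub_right τ).continuousOn hdelay) (H a)
  let H' : ℝ → E := fun t => if t ≤ a then H t else α t
  have hH'H : EqOn H' H (Iic a) := fun t ht => if_pos ht
  have hH'α : EqOn H' α (Icc a (a + τ)) := fun t ht => by
    rcases ht.1.eq_or_lt with rfl | hat
    · exact (hH'H (mem_Iic.2 le_rfl)).trans hαa.symm
    · exact if_neg (not_le.2 hat)
  refine ⟨H', fun t ht => (hH'H (ht.2.trans ha)).trans (hH.1 t ht), ?_, ?_⟩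
  · rw [← Icc_union_Icc_eq_Icc (by linarith : -τ ≤ a) (by linarith : a ≤ a + τ)]
    exact (hH.2.1.congr fun t ht => hH'H ht.2).union_of_isClosed
      (ContinuousOn.congr (fun t ht => (hα t ht).continuousWithinAt) hH'α) isClosed_Icc isClosed_Icc
  · intro t ht
    have hpast : H' (t - τ) = H (t - τ) := hH'H (by show t - τ ≤ a; linarith [ht.2])
    rw [← Icc_union_Icc_eq_Icc ha (by linarith : a ≤ a + τ)]
    refine hasDerivWithinAt_union_of_isClosed isClosed_Icc isClosed_Icc (fun hlo => ?_) fun hhi => ?_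
    · rw [hpast, hH'H hlo.2]
      exact (hH.2.2 t hlo).congr (fun s hs => hH'H hs.2) (hH'H hlo.2)
    · rw [hpast, hH'α hhi]
      exact (hα t hhi).congr (fun s hs => hH'α hs) (hH'α hhi)

end IsDDESolutionOn

theorem exists_isDDESolutionOn [CompleteSpace E] {C : ℝ} (hf : ∀ c, LipschitzWith K (f · c))
    (hfc : ∀ x, Continuous (f x)) (hbdd : ∀ u v, ‖f u v‖ ≤ C) (hτ : 0 < τ)
    (hφ : ContinuousOn φ (Icc (-τ) 0)) (b : ℝ) : ∃ H, IsDDESolutionOn f τ φ b H := by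
  suffices ∀ k : ℕ, ∃ H, IsDDESolutionOn f τ φ (k * τ) H by
    obtain ⟨k, hk⟩ := exists_nat_ge (b / τ)
    obtain ⟨H, hH⟩ := this k
    exact ⟨H, hH.mono ((div_le_iff₀ hτ).1 hk)⟩
  intro k
  induction k with
  | zero => exact ⟨φ, by simpa using isDDESolutionOn_zero hφ⟩
  | succ k ih =>
    obtain ⟨H, hH⟩ := ih
    obtain ⟨H', hH'⟩ := hH.exists_extend hf hfc hbdd hτ.le (by positivity)
    exact ⟨H', by rwa [Nat.cast_succ, add_one_mul]⟩

theorem isDDESolution_iff_forall_isDDESolutionOn {h : ℝ → E} :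
    IsDDESolution f τ φ h ↔ ∀ b, IsDDESolutionOn f τ φ b h := by
  have hnhds : ∀ c t : ℝ, Icc c (t + 1) ∈ 𝓝[Ici c] t := fun c t => by
    simpa only [Ici_inter_Iic] using inter_mem_nhdsWithin (Ici c) (Iic_mem_nhds (lt_add_one t))
  refine ⟨fun ⟨h0, hc, hd⟩ b => ⟨h0, hc.mono Icc_subset_Ici_self, fun t ht =>
    (hd t ht.1).mono Icc_subset_Ici_self⟩, fun hh => ⟨(hh 0).1, fun t ht => ?_, fun t ht => ?_⟩⟩
  · exact ((hh (t + 1)).2.1 t ⟨ht, by linarith⟩).mono_of_mem_nhdsWithin (hnhds _ t)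
  · exact ((hh (t + 1)).2.2 t ⟨ht, by linarith⟩).mono_of_mem_nhdsWithin (hnhds _ t)

theorem IsDDESolution.eqOn (hf : ∀ c, LipschitzWith K (f · c)) (hτ : 0 < τ)
    (hG : IsDDESolution f τ φ G) (hH : IsDDESolution f τ φ H) : EqOn G H (Ici (-τ)) :=
  fun t ht => (isDDESolution_iff_forall_isDDESolutionOn.1 hG t).eqOn hf hτ
    (isDDESolution_iff_forall_isDDESolutionOn.1 hH t) ⟨ht, le_rfl⟩

theorem exists_isDDESolution [CompleteSpace E] {C : ℝ} (hf : ∀ c, LipschitzWith K (f · c))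
    (hfc : ∀ x, Continuous (f x)) (hbdd : ∀ u v, ‖f u v‖ ≤ C) (hτ : 0 < τ)
    (hφ : ContinuousOn φ (Icc (-τ) 0)) : ∃ h, IsDDESolution f τ φ h := by
  choose sol hsol using exists_isDDESolutionOn hf hfc hbdd hτ hφ
  have hglue : ∀ b, EqOn (fun t => sol (t + 1) t) (sol b) (Icc (-τ) b) := fun b t ht =>
    ((hsol (t + 1)).mono (by linarith)).eqOn hf hτ ((hsol b).mono ht.2) ⟨ht.1, le_rfl⟩
  refine ⟨fun t => sol (t + 1) t, isDDESolution_iff_forall_isDDESolutionOn.2 fun b => ?_⟩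
  exact ((hsol _).congr hτ.le (le_max_right b 0) (hglue _)).mono (le_max_left b 0)

end

/-- Existence and uniqueness (method of steps) for the DDE
`h'(t) = f(h(t), h(t−τ))` with bounded Lipschitz `f` and continuous initial
function `φ` on `[−τ, 0]`: there is a unique solution on `[−τ, ∞)`. -/
theorem dde_exists_unique {d : ℕ}
    (f : EuclideanSpace ℝ (Fin d) → EuclideanSpace ℝ (Fin d) → EuclideanSpace ℝ (Fin d))
    (K : NNReal)
    (hLip : LipschitzWith K fun p : EuclideanSpace ℝ (Fin d) × EuclideanSpace ℝ (Fin d) =>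
      f p.1 p.2)
    (C : ℝ) (hbdd : ∀ u v, ‖f u v‖ ≤ C)
    (τ : ℝ) (hτ : 0 < τ)
    (φ : ℝ → EuclideanSpace ℝ (Fin d)) (hφ : ContinuousOn φ (Set.Icc (-τ) 0)) :
    ∃ h : ℝ → EuclideanSpace ℝ (Fin d),
      ((∀ t ∈ Set.Icc (-τ) 0, h t = φ t) ∧
        ContinuousOn h (Set.Ici (-τ)) ∧
        ∀ t ∈ Set.Ici (0 : ℝ),
          HasDerivWithinAt h (f (h t) (h (t - τ))) (Set.Ici 0) t) ∧
      ∀ g : ℝ → EuclideanSpace ℝ (Fin d),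
        ((∀ t ∈ Set.Icc (-τ) 0, g t = φ t) ∧
          ContinuousOn g (Set.Ici (-τ)) ∧
          ∀ t ∈ Set.Ici (0 : ℝ),
            HasDerivWithinAt g (f (g t) (g (t - τ))) (Set.Ici 0) t) →
        ∀ t ∈ Set.Ici (-τ), g t = h t := by
  have hf : ∀ c, LipschitzWith K (f · c) := fun c => by
    simpa only [mul_one, Function.comp_def] using hLip.comp (LipschitzWith.prodMk_right c)
  have hfc : ∀ x, Continuous (f x) := fun x => (hLip.comp (LipschitzWith.prodMk_left x)).continuous
  obtain ⟨h, hh⟩ := exists_isDDESolution hf hfc hbdd hτ hφ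
  exact ⟨h, hh, fun g hg => IsDDESolution.eqOn hf hτ hg hh⟩
end

section
/- Let Φ_t be the flow of an ODE x' = f(x, t) on ℝᵈ with f Lipschitz in x uniformly in t ∈ [0, T], with solutions existing on [0, T]. Then Φ_T : ℝᵈ → ℝᵈ is a homeomorphism onto its image; in particular, the images Φ_T(A) and Φ_T(B) of any two disjoint linked compact sets A (a closed ball) and B (an annulus surrounding it, d = 2) cannot be separated by a hyperplane if Φ_T is, additionally, homotopic through homeomorphisms to the identity. -/
/-!
Grönwall's inequality, applied to the equation and to its time reversal, makes the time-`T` map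
bi-Lipschitz, hence an embedding.

For the second part, follow the circle of radius `r₂` along the homotopy, seen from the image of
the centre: `A (t, θ) = H t (r₂ e^{iθ}) - H t 0` never vanishes because each `H t` is injective.
As `ℝ²` is simply connected, `A` has a continuous logarithm, whose increment over one turn is a
continuous multiple of `2πi`, hence independent of `t`. At `t = 0` the loop is the circle and the
increment is `2πi`; a line separating `H T 0` from the image of the circle puts the loop at
`t = T` in an open half-plane, on which a branch of `log` exists, so the increment there is `0`.
-/

open Set Complex
open scoped Real

section ODE

variable {E : Type*} [NormedAddCommGroup E] [NormedSpace ℝ E] {v : ℝ → E → E} {K : NNReal}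
  {T : ℝ} {x y : ℝ → E}

theorem dist_le_of_hasDerivWithinAt_Icc (hv : ∀ t, LipschitzWith K (v t)) (hT : 0 ≤ T)
    (hx : ∀ t ∈ Icc 0 T, HasDerivWithinAt x (v t (x t)) (Icc 0 T) t)
    (hy : ∀ t ∈ Icc 0 T, HasDerivWithinAt y (v t (y t)) (Icc 0 T) t) :
    dist (x T) (y T) ≤ dist (x 0) (y 0) * Real.exp (K * T) := by
  have hright : ∀ z : ℝ → E, (∀ t ∈ Icc 0 T, HasDerivWithinAt z (v t (z t)) (Icc 0 T) t) →
      ∀ t ∈ Ico 0 T, HasDerivWithinAt z (v t (z t)) (Ici t) t := fun z hz t ht =>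
    (hz t (Ico_subset_Icc_self ht)).mono_of_mem_nhdsWithin (Icc_mem_nhdsGE_of_mem ht)
  simpa using dist_le_of_trajectories_ODE hv (fun t ht => (hx t ht).continuousWithinAt)
    (hright x hx) (fun t ht => (hy t ht).continuousWithinAt) (hright y hy) le_rfl T ⟨hT, le_rfl⟩

theorem hasDerivWithinAt_Icc_reverse
    (hx : ∀ t ∈ Icc 0 T, HasDerivWithinAt x (v t (x t)) (Icc 0 T) t) :
    ∀ t ∈ Icc 0 T,
      HasDerivWithinAt (fun s => x (T - s)) (-v (T - t) (x (T - t))) (Icc 0 T) t := by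
  intro t ht
  have hmaps : MapsTo (T - ·) (Icc 0 T) (Icc 0 T) := fun s hs =>
    ⟨by linarith [hs.2], by linarith [hs.1]⟩
  simpa [Function.comp_def] using
    (hx (T - t) (hmaps ht)).scomp t ((hasDerivAt_id t).const_sub T).hasDerivWithinAt hmaps

theorem isEmbedding_flow (f : E → ℝ → E) (hf : ∀ t, LipschitzWith K fun x => f x t) (hT : 0 ≤ T)
    (sol : E → ℝ → E) (hinit : ∀ x, sol x 0 = x)
    (hsol : ∀ x, ∀ t ∈ Icc 0 T, HasDerivWithinAt (sol x) (f (sol x t) t) (Icc 0 T) t) :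
    Topology.IsEmbedding fun x => sol x T := by
  set C := (Real.exp (K * T)).toNNReal
  have hC : (C : ℝ) = Real.exp (K * T) := Real.coe_toNNReal _ (Real.exp_nonneg _)
  have hforward : LipschitzWith C fun x => sol x T := .of_dist_le_mul fun x y => by
    rw [hC, mul_comm]
    simpa [hinit] using dist_le_of_hasDerivWithinAt_Icc hf hT (hsol x) (hsol y)
  have hbackward : AntilipschitzWith C fun x => sol x T := .of_le_mul_dist fun x y => by
    rw [hC, mul_comm]
    simpa [hinit] using dist_le_of_hasDerivWithinAt_Icc (v := fun t z => -f z (T - t))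
      (fun t => (hf (T - t)).neg) hT
      (hasDerivWithinAt_Icc_reverse (v := fun t z => f z t) (hsol x))
      (hasDerivWithinAt_Icc_reverse (v := fun t z => f z t) (hsol y))
  exact (hbackward.isUniformEmbedding hforward.uniformContinuous).isEmbedding

end ODE

namespace Complex

theorem exists_continuous_exp_eq {X : Type*} [TopologicalSpace X] [SimplyConnectedSpace X]
    [LocallyPathConnectedSpace X] {f : X → ℂ} (hf : Continuous f) (hf0 : ∀ x, f x ≠ 0) :
    ∃ g : X → ℂ, Continuous g ∧ ∀ x, exp (g x) = f x := by
  obtain ⟨x₀⟩ : Nonempty X := inferInstance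
  obtain ⟨g, ⟨-, hg⟩, -⟩ := isCoveringMapOn_exp.existsUnique_continuousMap_lifts ⟨f, hf⟩
    (exp_log (hf0 x₀)) hf0
  exact ⟨g, g.continuous, congr_fun hg⟩

theorem sub_eq_sub_of_exp_eq_exp {X : Type*} [TopologicalSpace X] [PreconnectedSpace X]
    {g₁ g₂ : X → ℂ} (h₁ : Continuous g₁) (h₂ : Continuous g₂) (h : ∀ x, exp (g₁ x) = exp (g₂ x))
    (x y : X) : g₁ x - g₂ x = g₁ y - g₂ y :=
  isCoveringMap_exp.const_of_comp (h₁.sub h₂) (fun a b => Subtype.ext (by simp [exp_sub, h])) x y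

theorem exists_apply_eq_re_mul (ℓ : ℂ →L[ℝ] ℝ) : ∃ u : ℂ, ∀ z, ℓ z = (u * z).re :=
  ⟨ℓ 1 - ℓ I * I, fun z => by
    have hz : z = z.re • (1 : ℂ) + z.im • I := by simp
    conv_lhs => rw [hz, map_add, map_smul, map_smul]
    simp [mul_re, mul_comm]⟩

theorem exists_re_mul_nonpos_of_homotopy_of_circle {A : ℝ × ℝ → ℂ} (hA : Continuous A)
    (hA0 : ∀ p, A p ≠ 0) (hper : ∀ t θ, A (t, θ + 2 * π) = A (t, θ)) {c : ℂ} (hc : c ≠ 0)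
    (hcircle : ∀ θ : ℝ, A (0, θ) = c * exp (θ * I)) (t : ℝ) (u : ℂ) :
    ∃ θ, (u * A (t, θ)).re ≤ 0 := by
  obtain ⟨g, hg, hexp⟩ := exists_continuous_exp_eq hA hA0
  have hincrement : ∀ p q : ℝ × ℝ, g (p.1, p.2 + 2 * π) - g p = g (q.1, q.2 + 2 * π) - g q :=
    sub_eq_sub_of_exp_eq_exp (g₁ := fun p => g (p.1, p.2 + 2 * π)) (by fun_prop) hg
      fun p => by rw [hexp, hexp, hper]
  have hwinding₀ : g (0, 0 + 2 * π) - g (0, 0) = 2 * π * I := by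
    have := sub_eq_sub_of_exp_eq_exp (g₁ := fun θ : ℝ => g (0, θ))
      (g₂ := fun θ : ℝ => log c + θ * I) (by fun_prop) (by fun_prop)
      (fun θ => by rw [hexp, hcircle, exp_add, exp_log hc]) (0 + 2 * π) 0
    push_cast at this
    linear_combination this
  by_contra! hhalf
  have hu : u ≠ 0 := by rintro rfl; simpa using hhalf 0
  have hwinding : g (t, 0 + 2 * π) - g (t, 0) = 0 := by
    have := sub_eq_sub_of_exp_eq_exp (g₁ := fun θ : ℝ => g (t, θ))
      (g₂ := fun θ : ℝ => log (u * A (t, θ)) - log u) (by fun_prop)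
      ((Continuous.clog (by fun_prop) fun θ => Or.inl (hhalf θ)).sub continuous_const)
      (fun θ => by rw [hexp, exp_sub, exp_log (mul_ne_zero hu (hA0 _)), exp_log hu,
        mul_div_cancel_left₀ _ hu]) (0 + 2 * π) 0
    rw [hper] at this
    linear_combination this
  have := hincrement (0, 0) (t, 0)
  rw [hwinding₀, hwinding] at this
  simp [Real.pi_ne_zero] at this

end Complex

theorem exists_norm_eq_apply_le_of_injective_homotopy
    {H : ℝ → EuclideanSpace ℝ (Fin 2) → EuclideanSpace ℝ (Fin 2)}
    (hH : Continuous fun p : ℝ × EuclideanSpace ℝ (Fin 2) => H p.1 p.2) (h0 : H 0 = id)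
    (hinj : ∀ t, Function.Injective (H t)) {r : ℝ} (hr : 0 < r)
    (ℓ : EuclideanSpace ℝ (Fin 2) →L[ℝ] ℝ) (t : ℝ) :
    ∃ x, ‖x‖ = r ∧ ℓ (H t x) ≤ ℓ (H t 0) := by
  let e := Complex.orthonormalBasisOneI.repr
  let γ : ℝ → EuclideanSpace ℝ (Fin 2) := fun θ => e (r * exp (θ * I))
  have hγ : ∀ θ, ‖γ θ‖ = r := fun θ => by simp [γ, norm_exp_ofReal_mul_I, hr.le]
  let A : ℝ × ℝ → ℂ := fun p => e.symm (H p.1 (γ p.2) - H p.1 0)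
  have hA0 : ∀ p, A p ≠ 0 := fun p h => by
    have h' : γ p.2 = 0 := hinj p.1 (sub_eq_zero.mp (e.symm.map_eq_zero_iff.mp h))
    exact hr.ne (by simpa [h'] using hγ p.2)
  have hper : ∀ t θ, A (t, θ + 2 * π) = A (t, θ) := fun t θ => by
    simp [A, γ, add_mul, exp_add]
  have hcircle : ∀ θ : ℝ, A (0, θ) = r * exp (θ * I) := fun θ => by simp [A, γ, h0]
  obtain ⟨u, hu⟩ := exists_apply_eq_re_mul (ℓ.comp e.toContinuousLinearEquiv.toContinuousLinearMap)
  obtain ⟨θ, hθ⟩ := exists_re_mul_nonpos_of_homotopy_of_circle (by fun_prop) hA0 hper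
    (by exact_mod_cast hr.ne') hcircle t u
  refine ⟨γ θ, hγ θ, ?_⟩
  rw [← hu] at hθ
  simpa [A] using hθ

theorem ode_flow_embedding_no_separation_general
    (f : EuclideanSpace ℝ (Fin 2) → ℝ → EuclideanSpace ℝ (Fin 2))
    (K : NNReal) (hLip : ∀ t, LipschitzWith K fun x => f x t)
    (T : ℝ) (hT : 0 < T)
    (sol : EuclideanSpace ℝ (Fin 2) → ℝ → EuclideanSpace ℝ (Fin 2))
    (hinit : ∀ x, sol x 0 = x)
    (hsol : ∀ x, ∀ t ∈ Set.Icc 0 T,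
      HasDerivWithinAt (sol x) (f (sol x t) t) (Set.Icc 0 T) t)
    (Φ : EuclideanSpace ℝ (Fin 2) → EuclideanSpace ℝ (Fin 2))
    (hΦ : Φ = fun x => sol x T)
    (r₁ r₂ r₃ : ℝ) (h01 : 0 < r₁) (h12 : r₁ < r₂) (h23 : r₂ < r₃) :
    Topology.IsEmbedding Φ ∧
      ((∃ H : ℝ → EuclideanSpace ℝ (Fin 2) → EuclideanSpace ℝ (Fin 2),
          Continuous (fun p : ℝ × EuclideanSpace ℝ (Fin 2) => H p.1 p.2) ∧
          H 0 = id ∧ H T = Φ ∧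
          ∀ t, Function.Injective (H t) ∧ Continuous (H t)) →
        ¬ ∃ (ℓ : EuclideanSpace ℝ (Fin 2) →L[ℝ] ℝ) (c : ℝ),
          (∀ x ∈ Metric.closedBall (0 : EuclideanSpace ℝ (Fin 2)) r₁, ℓ (Φ x) < c) ∧
          (∀ x : EuclideanSpace ℝ (Fin 2), r₂ ≤ ‖x‖ → ‖x‖ ≤ r₃ → c < ℓ (Φ x))) := by
  refine ⟨hΦ ▸ isEmbedding_flow f hLip hT.le sol hinit hsol, ?_⟩
  rintro ⟨H, hHcont, hH0, hHT, hHinj⟩ ⟨ℓ, c, hball, hannulus⟩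
  obtain ⟨x, hx, hle⟩ := exists_norm_eq_apply_le_of_injective_homotopy hHcont hH0
    (fun t => (hHinj t).1) (h01.trans h12) ℓ T
  rw [hHT] at hle
  have hcentre := hball 0 (Metric.mem_closedBall_self h01.le)
  have hcircle := hannulus x hx.ge (hx.le.trans h23.le)
  linarith

/-- The time-`T` flow map of a Lipschitz ODE on `ℝ²` is a
homeomorphism onto its image (an embedding); moreover, if it is homotopic through
injective continuous maps (homeomorphisms onto their images) to the identity, then
the images of a closed ball and of an annulus surrounding it cannot be separated
by a hyperplane. -/
theorem ode_flow_embedding_no_separation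
    (f : EuclideanSpace ℝ (Fin 2) → ℝ → EuclideanSpace ℝ (Fin 2))
    (K : NNReal) (hLip : ∀ t, LipschitzWith K fun x => f x t)
    (hcont : ∀ x, Continuous (f x))
    (T : ℝ) (hT : 0 < T)
    (sol : EuclideanSpace ℝ (Fin 2) → ℝ → EuclideanSpace ℝ (Fin 2))
    (hinit : ∀ x, sol x 0 = x)
    (hsol : ∀ x, ∀ t ∈ Set.Icc 0 T,
      HasDerivWithinAt (sol x) (f (sol x t) t) (Set.Icc 0 T) t)
    (Φ : EuclideanSpace ℝ (Fin 2) → EuclideanSpace ℝ (Fin 2))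
    (hΦ : Φ = fun x => sol x T)
    (r₁ r₂ r₃ : ℝ) (h01 : 0 < r₁) (h12 : r₁ < r₂) (h23 : r₂ < r₃) :
    Topology.IsEmbedding Φ ∧
      ((∃ H : ℝ → EuclideanSpace ℝ (Fin 2) → EuclideanSpace ℝ (Fin 2),
          Continuous (fun p : ℝ × EuclideanSpace ℝ (Fin 2) => H p.1 p.2) ∧
          H 0 = id ∧ H T = Φ ∧
          ∀ t, Function.Injective (H t) ∧ Continuous (H t)) →
        ¬ ∃ (ℓ : EuclideanSpace ℝ (Fin 2) →L[ℝ] ℝ) (c : ℝ),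
          (∀ x ∈ Metric.closedBall (0 : EuclideanSpace ℝ (Fin 2)) r₁, ℓ (Φ x) < c) ∧
          (∀ x : EuclideanSpace ℝ (Fin 2), r₂ ≤ ‖x‖ → ‖x‖ ≤ r₃ → c < ℓ (Φ x))) :=
  ode_flow_embedding_no_separation_general f K hLip T hT sol hinit hsol Φ hΦ r₁ r₂ r₃ h01 h12 h23
end

section
/- Let F : ℝⁿ → ℝⁿ be continuous and suppose a neural network Ĝ satisfies sup_x ‖Ĝ(x) − (F(x) − x)/T‖ ≤ ε. Then the NDDE h'(t) = Ĝ(h(t−τ)), h ≡ x on [−τ, 0], with τ = T, satisfies ‖h(T) − F(x)‖ ≤ T·ε for every x. -/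
/-! On `[0, τ]` the delayed argument `t - τ` lies in the history interval, so the equation
`h' = g (h (t - τ))` has the constant right-hand side `g x` there and `h t = x + t • g x`.
With `τ = T` this gives `h T - F x = T • (G x - (1 / T) • (F x - x))`. -/

open Set

theorem eq_add_smul_of_hasDerivWithinAt_delay_s17 {E : Type*} [NormedAddCommGroup E]
    [NormedSpace ℝ E] {g : E → E} {h : ℝ → E} {x : E} {τ : ℝ}
    (hist : ∀ t ≤ (0 : ℝ), h t = x)
    (hdde : ∀ t ∈ Ici (0 : ℝ), HasDerivWithinAt h (g (h (t - τ))) (Ici 0) t) :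
    ∀ t ∈ Icc 0 τ, h t = x + t • g x := by
  have hderiv : ∀ t ∈ Ico 0 τ, HasDerivWithinAt h (g x) (Ici t) t := fun t ht => by
    simpa only [hist (t - τ) (by linarith [ht.2])] using
      (hdde t ht.1).mono (Ici_subset_Ici.mpr ht.1)
  have hline : ∀ t ∈ Ico 0 τ, HasDerivWithinAt (fun s : ℝ => x + s • g x) (g x) (Ici t) t :=
    fun t _ => by simpa using ((hasDerivAt_id t).smul_const (g x)).const_add x |>.hasDerivWithinAt
  have hcont : ContinuousOn h (Icc 0 τ) := fun t ht =>
    ((hdde t ht.1).continuousWithinAt).mono Icc_subset_Ici_self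
  exact eq_of_has_deriv_right_eq hderiv hline hcont (by fun_prop) (by simp [hist 0 le_rfl])

theorem ndde_approximates_F_general {n : ℕ}
    (F G : EuclideanSpace ℝ (Fin n) → EuclideanSpace ℝ (Fin n))
    (T ε : ℝ) (hT : 0 < T)
    (hG : ∀ x, ‖G x - (1 / T) • (F x - x)‖ ≤ ε)
    (h : EuclideanSpace ℝ (Fin n) → ℝ → EuclideanSpace ℝ (Fin n))
    (hist : ∀ x, ∀ t ≤ (0 : ℝ), h x t = x)
    (hdde : ∀ x, ∀ t ∈ Set.Ici (0 : ℝ),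
      HasDerivWithinAt (h x) (G (h x (t - T))) (Set.Ici 0) t) :
    ∀ x, ‖h x T - F x‖ ≤ T * ε := by
  intro x
  have hT_val : h x T = x + T • G x :=
    eq_add_smul_of_hasDerivWithinAt_delay_s17 (hist x) (hdde x) T ⟨hT.le, le_rfl⟩
  calc ‖h x T - F x‖ = ‖T • (G x - (1 / T) • (F x - x))‖ := by
        rw [hT_val, smul_sub, smul_smul, mul_one_div_cancel hT.ne', one_smul]
        congr 1
        abel
    _ = T * ‖G x - (1 / T) • (F x - x)‖ := by rw [norm_smul, Real.norm_of_nonneg hT.le]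
    _ ≤ T * ε := by gcongr; exact hG x

/-- quantitative universal approximation for NDDEs: if
`‖Ĝ(x) − (F(x) − x)/T‖ ≤ ε` for all `x`, then the NDDE `h'(t) = Ĝ(h(t−T))` with
constant history `x` satisfies `‖h(T) − F(x)‖ ≤ T·ε`. -/
theorem ndde_approximates_F {n : ℕ}
    (F G : EuclideanSpace ℝ (Fin n) → EuclideanSpace ℝ (Fin n)) (hF : Continuous F)
    (T ε : ℝ) (hT : 0 < T) (hε : 0 ≤ ε)
    (hG : ∀ x, ‖G x - (1 / T) • (F x - x)‖ ≤ ε)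
    (h : EuclideanSpace ℝ (Fin n) → ℝ → EuclideanSpace ℝ (Fin n))
    (hist : ∀ x, ∀ t ≤ (0 : ℝ), h x t = x)
    (hdde : ∀ x, ∀ t ∈ Set.Ici (0 : ℝ),
      HasDerivWithinAt (h x) (G (h x (t - T))) (Set.Ici 0) t) :
    ∀ x, ‖h x T - F x‖ ≤ T * ε :=
  ndde_approximates_F_general F G T ε hT hG h hist hdde
end
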